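/- The hyperbolic even 2-elementary lattice U ⊕ E8 ⊕ E8 is generated by 19 vectors α_1,...,α_19 of square -2 whose Gram matrix is given by the Coxeter diagram in which α_1,...,α_9 and α_11,...,α_19 form two E8-chains attached to α_10, and these generators satisfy the single relation 3α_1 + 2α_2 + 4α_3 + 6α_4 + 5α_5 + 4α_6 + 3α_7 + 2α_8 + α_9 = 3α_19 + 2α_18 + 4α_17 + 6α_16 + 5α_15 + 4α_14 + 3α_13 + 2α_12 + α_11. -/

import Mathlib

noncomputable section

/-- The hyperbolic plane lattice `U`, as `ℤ²`. -/
abbrev ULat := Fin 2 → ℤ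
/-- The (negative definite) `E8` lattice, as `ℤ⁸`. -/
abbrev E8Lat := Fin 8 → ℤ

/-- Gram matrix of the hyperbolic plane `U`. -/
def Ugram : Matrix (Fin 2) (Fin 2) ℤ := !![0,1;1,0]

/-- Gram matrix of the negative definite `E8` lattice (negative of the E8 Cartan matrix,
in Bourbaki labeling). -/
def E8gram : Matrix (Fin 8) (Fin 8) ℤ :=
  !![-2,0,1,0,0,0,0,0;
     0,-2,0,1,0,0,0,0;
     1,0,-2,1,0,0,0,0;
     0,1,1,-2,1,0,0,0;
     0,0,0,1,-2,1,0,0;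
     0,0,0,0,1,-2,1,0;
     0,0,0,0,0,1,-2,1;
     0,0,0,0,0,0,1,-2]

/-- The bilinear form of `U`. -/
def Ubil : ULat →ₗ[ℤ] ULat →ₗ[ℤ] ℤ := Matrix.toLinearMap₂' ℤ Ugram
/-- The bilinear form of `E8`. -/
def E8bil : E8Lat →ₗ[ℤ] E8Lat →ₗ[ℤ] ℤ := Matrix.toLinearMap₂' ℤ E8gram

/-- Orthogonal direct sum of two bilinear forms. -/
def prodBil {M N : Type} [AddCommGroup M] [Module ℤ M] [AddCommGroup N] [Module ℤ N]
    (bM : M →ₗ[ℤ] M →ₗ[ℤ] ℤ) (bN : N →ₗ[ℤ] N →ₗ[ℤ] ℤ) :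
    (M × N) →ₗ[ℤ] (M × N) →ₗ[ℤ] ℤ :=
  LinearMap.mk₂ ℤ (fun x y => bM x.1 y.1 + bN x.2 y.2)
    (fun a b c => by simp [map_add]; ring)
    (fun r a b => by simp; ring)
    (fun a b c => by simp [map_add]; ring)
    (fun r a b => by simp; ring)

/-- Two (ℤ-)lattices with forms (valued in `R`) are isometric. -/
def IsometricForms {R M N : Type} [AddCommGroup M] [Module ℤ M] [AddCommGroup N] [Module ℤ N]
    (bM : M → M → R) (bN : N → N → R) : Prop :=
  ∃ e : M ≃ₗ[ℤ] N, ∀ x y, bN (e x) (e y) = bM x y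


/-- The lattice `U ⊕ E8 ⊕ E8`. -/
abbrev UE8E8Lat := ULat × E8Lat × E8Lat

/-- The bilinear form of `U ⊕ E8 ⊕ E8`. -/
def UE8E8bil : UE8E8Lat →ₗ[ℤ] UE8E8Lat →ₗ[ℤ] ℤ :=
  prodBil Ubil (prodBil E8bil E8bil)

/-- The Gram matrix of the 19 simple roots `α_1, …, α_19` in Vinberg's Coxeter diagram for
`U ⊕ E8²`: all squares are `-2`; the vertices `α_2, α_3, …, α_18` form a chain, `α_1` is
attached to `α_4`, and `α_19` is attached to `α_16` (so `α_1,…,α_9` and `α_11,…,α_19` form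
two `E8`-chains attached to `α_10`); all other products vanish.  Indexing: `i : Fin 19`
corresponds to `α_{i+1}`. -/
def gram19 : Matrix (Fin 19) (Fin 19) ℤ := fun i j =>
  if i = j then -2
  else if (2 ≤ i.val + 1 ∧ i.val + 1 ≤ 17 ∧ j.val = i.val + 1) ∨
          (2 ≤ j.val + 1 ∧ j.val + 1 ≤ 17 ∧ i.val = j.val + 1) ∨
          (i.val + 1 = 1 ∧ j.val + 1 = 4) ∨ (j.val + 1 = 1 ∧ i.val + 1 = 4) ∨
          (i.val + 1 = 19 ∧ j.val + 1 = 16) ∨ (j.val + 1 = 19 ∧ i.val + 1 = 16)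
  then 1 else 0

/-- The coefficient vector of the single relation among the 19 roots,
`3α_1 + 2α_2 + 4α_3 + 6α_4 + 5α_5 + 4α_6 + 3α_7 + 2α_8 + α_9
  = 3α_19 + 2α_18 + 4α_17 + 6α_16 + 5α_15 + 4α_14 + 3α_13 + 2α_12 + α_11`. -/
def relCoef : Fin 19 → ℤ := ![3,2,4,6,5,4,3,2,1,0,-1,-2,-3,-4,-5,-6,-4,-2,-3]

/-!
Write `e, f` for the standard basis of `U` (so `e² = f² = 0`, `e·f = 1`) and `θ` for the highest
root of `E8`, whose coordinates in the simple roots are the marks `2, 3, 4, 6, 5, 4, 3, 2`.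
Take `α_1, …, α_8` and `α_19, …, α_12` to be the simple roots of the two copies of `E8`,
`α_9 = e - θ` and `α_11 = e - θ'` the two affine roots, and `α_10 = f - e`.
Since `θ` is the sum of the simple roots weighted by the marks, both sides of the relation equal
the isotropic vector `e`. The 18 roots other than `α_9` form a basis of the lattice: `e` and
`f` are recovered from `α_11`, `α_10` and the second `E8`. Coordinates in that basis give both
the spanning and the fact that every relation is a multiple of the given one.
-/

def highestRoot : E8Lat := ![2, 3, 4, 6, 5, 4, 3, 2]

def simpleRoot (k : Fin 8) : E8Lat := fun j => if j = k then 1 else 0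

def roots : Fin 19 → UE8E8Lat := ![
  (0, simpleRoot 1, 0), (0, simpleRoot 0, 0), (0, simpleRoot 2, 0), (0, simpleRoot 3, 0),
  (0, simpleRoot 4, 0), (0, simpleRoot 5, 0), (0, simpleRoot 6, 0), (0, simpleRoot 7, 0),
  (![1, 0], -highestRoot, 0),
  (![-1, 1], 0, 0),
  (![1, 0], 0, -highestRoot),
  (0, 0, simpleRoot 7), (0, 0, simpleRoot 6), (0, 0, simpleRoot 5), (0, 0, simpleRoot 4),
  (0, 0, simpleRoot 3), (0, 0, simpleRoot 2), (0, 0, simpleRoot 0), (0, 0, simpleRoot 1)]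

theorem roots_gram : Matrix.of (fun i j => UE8E8bil (roots i) (roots j)) = gram19 := by
  decide

/-- Coordinates in the basis `roots i`, `i ≠ 8`. With `w = u₀ + u₁`, the vector `(u₀, u₁)` of `U`
is `w • α_11 + u₁ • α_10 + w • θ'`, whence the marks of `θ'` in the last eight entries. -/
def rootCoords (x : UE8E8Lat) : Fin 19 → ℤ :=
  let a := x.2.1
  let b := x.2.2
  let w := x.1 0 + x.1 1
  ![a 1, a 0, a 2, a 3, a 4, a 5, a 6, a 7, 0, x.1 1, w,
    b 7 + 2 * w, b 6 + 3 * w, b 5 + 4 * w, b 4 + 5 * w, b 3 + 6 * w, b 2 + 4 * w, b 0 + 2 * w,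
    b 1 + 3 * w]

theorem sum_rootCoords_smul_roots (x : UE8E8Lat) : ∑ i, rootCoords x i • roots i = x := by
  obtain ⟨u, a, b⟩ := x
  refine Prod.ext ?_ (Prod.ext ?_ ?_) <;> ext k <;>
    simp only [Prod.fst_sum, Prod.snd_sum, Finset.sum_apply, Prod.smul_fst, Prod.smul_snd,
      Pi.smul_apply, smul_eq_mul] <;>
    fin_cases k <;> simp [Fin.sum_univ_succ, rootCoords, roots, simpleRoot, highestRoot] <;> ring

theorem rootCoords_sum_smul_roots (c : Fin 19 → ℤ) :
    rootCoords (∑ i, c i • roots i) = c - c 8 • relCoef := by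
  ext k
  simp only [rootCoords, Prod.fst_sum, Prod.snd_sum, Finset.sum_apply, Prod.smul_fst,
    Prod.smul_snd, Pi.smul_apply, smul_eq_mul]
  fin_cases k <;>
    simp only [Fin.reduceFinMk, Matrix.cons_val, Pi.sub_apply, Pi.smul_apply, relCoef,
      smul_eq_mul] <;>
    simp [Fin.sum_univ_succ, roots, simpleRoot, highestRoot] <;> ring

theorem span_roots : Submodule.span ℤ (Set.range roots) = ⊤ :=
  Submodule.eq_top_iff'.mpr fun x =>
    (Submodule.mem_span_range_iff_exists_fun ℤ).mpr ⟨rootCoords x, sum_rootCoords_smul_roots x⟩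

theorem eq_smul_relCoef_of_sum_smul_roots_eq_zero (c : Fin 19 → ℤ)
    (h : ∑ i, c i • roots i = 0) : c = c 8 • relCoef := by
  have hzero : rootCoords 0 = 0 := by decide
  rw [← sub_eq_zero, ← rootCoords_sum_smul_roots, h, hzero]

/-- The hyperbolic even 2-elementary lattice `U ⊕ E8 ⊕ E8` is generated by 19 vectors of
square `-2` realizing the Coxeter diagram `gram19`, and these generators satisfy the single
relation `3α_1 + 2α_2 + 4α_3 + 6α_4 + 5α_5 + 4α_6 + 3α_7 + 2α_8 + α_9 =
3α_19 + 2α_18 + 4α_17 + 6α_16 + 5α_15 + 4α_14 + 3α_13 + 2α_12 + α_11`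
(any other relation being an integer multiple of it). -/
theorem stmt9 :
    ∃ α : Fin 19 → UE8E8Lat,
      (∀ i j, UE8E8bil (α i) (α j) = gram19 i j) ∧
      Submodule.span ℤ (Set.range α) = ⊤ ∧
      ((3:ℤ) • α 0 + (2:ℤ) • α 1 + (4:ℤ) • α 2 + (6:ℤ) • α 3 + (5:ℤ) • α 4 +
        (4:ℤ) • α 5 + (3:ℤ) • α 6 + (2:ℤ) • α 7 + α 8
        = (3:ℤ) • α 18 + (2:ℤ) • α 17 + (4:ℤ) • α 16 + (6:ℤ) • α 15 + (5:ℤ) • α 14 +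
          (4:ℤ) • α 13 + (3:ℤ) • α 12 + (2:ℤ) • α 11 + α 10) ∧
      (∀ c : Fin 19 → ℤ, (∑ i, c i • α i = 0) → ∃ k : ℤ, c = k • relCoef) :=
  ⟨roots, fun i j => congr_fun₂ roots_gram i j, span_roots, by decide,
    fun c h => ⟨c 8, eq_smul_relCoef_of_sum_smul_roots_eq_zero c h⟩⟩
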